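/- arXiv:1701.01435 — 2 statements merged into one kernel-verified Lean document; each statement's English description precedes it below -/
import Mathlib

section
/- For every nonzero integer k, the Fourier coefficient of the potential V satisfies \hat V_k = (2R^3/L) * ( -sin(z_k)/z_k^3 + (1-\alpha) * cos(z_k)/z_k^2 + \alpha/z_k^2 ), where \alpha = \ell/R and z_k = \pi R |k| / L. -/
open Real MeasureTheory

/-- The 1D interaction potential: `V x = (|x| - ℓ)^2 - (R - ℓ)^2` for `|x| < R`, `0` otherwise. -/
noncomputable def potV (R ℓ : ℝ) (x : ℝ) : ℝ :=
  if |x| < R then (|x| - ℓ) ^ 2 - (R - ℓ) ^ 2 else 0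

/-- The `k`-th Fourier coefficient of `V` on the periodic domain `[-L, L]`. -/
noncomputable def VhatC (L R ℓ : ℝ) (k : ℤ) : ℂ :=
  (1 / (2 * L)) *
    ∫ x in (-L)..L, (potV R ℓ x : ℂ) *
      Complex.exp (-(Complex.I * (π : ℂ) * (k : ℂ) * (x : ℂ) / (L : ℂ)))

/-!
Since `V` is even, its Fourier coefficient is the cosine integral `(1/L) ∫₀ᴸ V(x) cos(a x) dx`
with `a = π|k|/L`. As `R ≤ L` and `V` vanishes for `|x| ≥ R`, only `[0, R]` contributes, where
`V` is the quadratic `(x - ℓ)² - (R - ℓ)²`; two integrations by parts, packaged as one explicit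
antiderivative, give the closed form in terms of `z = aR`.
-/

theorem intervalIntegral.integral_symm_eq_integral_add_comp_neg {E : Type*}
    [NormedAddCommGroup E] [NormedSpace ℝ E] {f : ℝ → E} {c : ℝ}
    (hf : IntervalIntegrable f volume (-c) c) :
    ∫ x in (-c)..c, f x = ∫ x in (0 : ℝ)..c, (f x + f (-x)) := by
  have hneg : IntervalIntegrable f volume (-c) 0 :=
    hf.mono_set (Set.uIcc_subset_uIcc_left (by simp [Set.mem_uIcc, le_total]))
  have hpos : IntervalIntegrable f volume 0 c :=
    hf.mono_set (Set.uIcc_subset_uIcc_right (by simp [Set.mem_uIcc, le_total]))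
  have hpos_neg : IntervalIntegrable (fun x ↦ f (-x)) volume 0 c := by
    simpa using (IntervalIntegrable.iff_comp_neg).mp hneg.symm
  rw [← integral_add_adjacent_intervals hneg hpos, integral_add hpos hpos_neg,
    integral_comp_neg, neg_zero, add_comm]

theorem intervalIntegral.integral_ofReal_mul_cexp_of_even {f : ℝ → ℝ} {c : ℝ}
    (hf : IntervalIntegrable f volume (-c) c) (hf_even : Function.Even f) (a : ℝ) :
    ∫ x in (-c)..c, (f x : ℂ) * Complex.exp (-(a * x * Complex.I)) =
      ((2 * ∫ x in (0 : ℝ)..c, f x * Real.cos (a * x) : ℝ) : ℂ) := by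
  rw [integral_symm_eq_integral_add_comp_neg
      (IntervalIntegrable.mul_continuousOn ⟨hf.1.ofReal, hf.2.ofReal⟩ (by fun_prop)),
    Complex.ofReal_mul, ← integral_ofReal, ← integral_const_mul]
  congr 1 with x
  have h2cos := Complex.two_cos (a * x)
  simp only [hf_even x, Complex.ofReal_neg, Complex.ofReal_mul, Complex.ofReal_cos,
    Complex.ofReal_ofNat, mul_neg, neg_mul, neg_neg] at h2cos ⊢
  linear_combination -(f x : ℂ) * h2cos

theorem potV_eq_min (R ℓ x : ℝ) : potV R ℓ x = (min |x| R - ℓ) ^ 2 - (R - ℓ) ^ 2 := by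
  unfold potV
  split_ifs with h
  · rw [min_eq_left h.le]
  · rw [min_eq_right (not_lt.mp h), sub_self]

theorem continuous_potV (R ℓ : ℝ) : Continuous (potV R ℓ) := by
  simp_rw [funext (potV_eq_min R ℓ)]
  fun_prop

theorem even_potV (R ℓ : ℝ) : Function.Even (potV R ℓ) := fun x ↦ by
  simp [potV, abs_neg]

theorem potV_of_le_abs {R ℓ x : ℝ} (hx : R ≤ |x|) : potV R ℓ x = 0 := by
  simp [potV, not_lt.mpr hx]

theorem potV_of_mem_Icc {R ℓ x : ℝ} (hx : x ∈ Set.Icc 0 R) :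
    potV R ℓ x = (x - ℓ) ^ 2 - (R - ℓ) ^ 2 := by
  rw [potV_eq_min, abs_of_nonneg hx.1, min_eq_left hx.2]

theorem integral_potV_mul_cos {R ℓ L : ℝ} (hR : 0 ≤ R) (hRL : R ≤ L) (a : ℝ) :
    ∫ x in (0 : ℝ)..L, potV R ℓ x * Real.cos (a * x) =
      ∫ x in (0 : ℝ)..R, ((x - ℓ) ^ 2 - (R - ℓ) ^ 2) * Real.cos (a * x) := by
  have hint (u v : ℝ) : IntervalIntegrable (fun x ↦ potV R ℓ x * Real.cos (a * x)) volume u v :=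
    ((continuous_potV R ℓ).mul (by fun_prop)).intervalIntegrable u v
  have htail : ∫ x in R..L, potV R ℓ x * Real.cos (a * x) = 0 := by
    rw [intervalIntegral.integral_congr (g := fun _ ↦ 0) fun x hx ↦ ?_,
      intervalIntegral.integral_zero]
    rw [Set.uIcc_of_le hRL] at hx
    simp [potV_of_le_abs (hx.1.trans (le_abs_self x))]
  rw [← intervalIntegral.integral_add_adjacent_intervals (hint 0 R) (hint R L), htail, add_zero]
  refine intervalIntegral.integral_congr fun x hx ↦ ?_
  rw [Set.uIcc_of_le hR] at hx
  simp only [potV_of_mem_Icc hx]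

theorem integral_sq_sub_sq_mul_cos (R ℓ : ℝ) {a : ℝ} (ha : a ≠ 0) :
    ∫ x in (0 : ℝ)..R, ((x - ℓ) ^ 2 - (R - ℓ) ^ 2) * Real.cos (a * x) =
      2 * (R - ℓ) * Real.cos (a * R) / a ^ 2 - 2 * Real.sin (a * R) / a ^ 3 + 2 * ℓ / a ^ 2 := by
  let F : ℝ → ℝ := fun x ↦ ((x - ℓ) ^ 2 - (R - ℓ) ^ 2) * Real.sin (a * x) / a
    + 2 * (x - ℓ) * Real.cos (a * x) / a ^ 2 - 2 * Real.sin (a * x) / a ^ 3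
  have hF (x : ℝ) : HasDerivAt F (((x - ℓ) ^ 2 - (R - ℓ) ^ 2) * Real.cos (a * x)) x := by
    have hax : HasDerivAt (a * ·) a x := by simpa using (hasDerivAt_id x).const_mul a
    have hsin := hax.sin
    have hquad : HasDerivAt (fun x ↦ (x - ℓ) ^ 2 - (R - ℓ) ^ 2) (2 * (x - ℓ)) x := by
      simpa using (((hasDerivAt_id x).sub_const ℓ).pow 2).sub_const ((R - ℓ) ^ 2)
    have hlin : HasDerivAt (fun x ↦ 2 * (x - ℓ)) 2 x := by
      simpa using ((hasDerivAt_id x).sub_const ℓ).const_mul 2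
    refine (((hquad.mul hsin).div_const a).add ((hlin.mul hax.cos).div_const (a ^ 2)) |>.sub
      ((hsin.const_mul 2).div_const (a ^ 3))).congr_deriv ?_
    field_simp
    ring
  rw [intervalIntegral.integral_eq_sub_of_hasDerivAt (fun x _ ↦ hF x)
    (by apply Continuous.intervalIntegrable; fun_prop)]
  simp only [F, mul_zero, Real.sin_zero, Real.cos_zero]
  field_simp
  ring

theorem fourier_coefficient_formula_general (L R ℓ : ℝ) (hL : 0 < L) (hR : 0 < R) (hRL : R ≤ L)
    (k : ℤ) (hk : k ≠ 0) :
    VhatC L R ℓ k =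
      (((2 * R ^ 3 / L) *
        (-(Real.sin (π * R * |(k : ℝ)| / L)) / (π * R * |(k : ℝ)| / L) ^ 3 +
          (1 - ℓ / R) * Real.cos (π * R * |(k : ℝ)| / L) / (π * R * |(k : ℝ)| / L) ^ 2 +
          (ℓ / R) / (π * R * |(k : ℝ)| / L) ^ 2) : ℝ) : ℂ) := by
  set a := π * |(k : ℝ)| / L with ha_def
  have ha : 0 < a := by positivity
  have hexp (x : ℝ) : -(Complex.I * π * k * x / L) = -(((π * k / L : ℝ) : ℂ) * x * Complex.I) := by
    push_cast; ring
  have hcos (x : ℝ) : Real.cos (π * k / L * x) = Real.cos (a * x) := by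
    rcases abs_choice (k : ℝ) with h | h <;>
      simp only [ha_def, h, neg_mul, mul_neg, neg_div, Real.cos_neg]
  simp_rw [VhatC, hexp, intervalIntegral.integral_ofReal_mul_cexp_of_even
      ((continuous_potV R ℓ).intervalIntegrable _ _) (even_potV R ℓ), hcos,
    integral_potV_mul_cos hR.le hRL, integral_sq_sub_sq_mul_cos R ℓ ha.ne',
    show π * R * |(k : ℝ)| / L = a * R by ring]
  rw [show (1 / (2 * L : ℂ)) = ((1 / (2 * L) : ℝ) : ℂ) by push_cast; rfl, ← Complex.ofReal_mul,
    Complex.ofReal_inj]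
  field_simp
  ring

theorem fourier_coefficient_formula (L R ℓ : ℝ) (hL : 0 < L) (hR : 0 < R) (hRL : R ≤ L)
    (hℓ : 0 ≤ ℓ) (k : ℤ) (hk : k ≠ 0) :
    VhatC L R ℓ k =
      (((2 * R ^ 3 / L) *
        (-(Real.sin (π * R * |(k : ℝ)| / L)) / (π * R * |(k : ℝ)| / L) ^ 3 +
          (1 - ℓ / R) * Real.cos (π * R * |(k : ℝ)| / L) / (π * R * |(k : ℝ)| / L) ^ 2 +
          (ℓ / R) / (π * R * |(k : ℝ)| / L) ^ 2) : ℝ) : ℂ) :=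
  fourier_coefficient_formula_general L R ℓ hL hR hRL k hk
end

section
/- Let f : \mathbb{R} \to \mathbb{R} be a twice continuously differentiable, 2L-periodic function with f(x) > 0 for all x, which is a stationary state of the aggregation-diffusion equation, i.e. the flux J(x) = D f'(x) + f(x) \cdot (d/dx)(V*f)(x) has zero derivative for all x. Then the function \xi(x) = D \log f(x) + (V*f)(x) is constant on \mathbb{R}. -/
/-! Stationarity says that the flux `J = f ξ'` is constant. Since `f > 0`, a nonzero constant
would make `ξ` strictly monotone, which is impossible for the periodic function `ξ`; hence
`ξ' = 0`. The analytic input is that `V * f` may be differentiated under the integral sign,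
`(V * f)' = V * f'`, because `V` is continuous with compact support. -/

open Real MeasureTheory

/-- Convolution of the potential `V` with a function `f`:
`(V * f)(x) = ∫ V(x - y) f(y) dy`. -/
noncomputable def Vconv (R ℓ : ℝ) (f : ℝ → ℝ) (x : ℝ) : ℝ :=
  ∫ y : ℝ, potV R ℓ (x - y) * f y

theorem hasDerivAt_integral_mul_sub {φ g : ℝ → ℝ} (hφ : Continuous φ) (hφc : HasCompactSupport φ)
    (hg : ContDiff ℝ 1 g) (x₀ : ℝ) :
    HasDerivAt (fun x => ∫ t, φ t * g (x - t)) (∫ t, φ t * deriv g (x₀ - t)) x₀ := by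
  have hgd : Differentiable ℝ g := hg.differentiable one_ne_zero
  have hg' : Continuous (deriv g) := hg.continuous_deriv le_rfl
  obtain ⟨r, hr⟩ := hφc.isCompact.isBounded.subset_closedBall 0
  obtain ⟨C, hC⟩ := (isCompact_closedBall x₀ (1 + r)).exists_bound_of_continuousOn hg'.continuousOn
  have hmeas : ∀ {h : ℝ → ℝ}, Continuous h → ∀ x,
      AEStronglyMeasurable (fun t => φ t * h (x - t)) volume := fun hh x =>
    (hφ.mul (hh.comp (continuous_const.sub continuous_id))).aestronglyMeasurable
  refine (hasDerivAt_integral_of_dominated_loc_of_deriv_le (F' := fun x t => φ t * deriv g (x - t))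
    (bound := fun t => ‖φ t‖ * C)
    (Metric.ball_mem_nhds x₀ one_pos) (.of_forall (hmeas hgd.continuous))
    ((hφ.mul (hgd.continuous.comp (continuous_const.sub continuous_id))).integrable_of_hasCompactSupport
      hφc.mul_right) (hmeas hg' x₀) (.of_forall fun t x hx => ?_)
    ((hφ.integrable_of_hasCompactSupport hφc).norm.mul_const C)
    (.of_forall fun t x _ => ?_)).2
  · -- on the support of `φ`, `x - t` stays in a ball on which `g'` is bounded by `C`
    rw [norm_mul]
    by_cases ht : φ t = 0
    · simp [ht]
    · refine mul_le_mul_of_nonneg_left (hC _ ?_) (norm_nonneg _)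
      have ht' : ‖t‖ ≤ r := mem_closedBall_zero_iff.mp (hr (subset_tsupport φ ht))
      rw [Metric.mem_ball, dist_eq_norm] at hx
      rw [Metric.mem_closedBall, dist_eq_norm]
      calc ‖x - t - x₀‖ ≤ ‖x - x₀‖ + ‖t‖ := by
            rw [sub_right_comm]; exact norm_sub_le _ _
        _ ≤ 1 + r := by linarith
  · simpa using (((hgd (x - t)).hasDerivAt.comp x ((hasDerivAt_id x).sub_const t)).const_mul (φ t))

theorem Function.Periodic.integral_mul_sub {φ f : ℝ → ℝ} {p : ℝ} (hf : Function.Periodic f p) :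
    Function.Periodic (fun x => ∫ t, φ t * f (x - t)) p := fun x => by
  simp only
  congr 1 with t
  rw [add_sub_right_comm, hf]

theorem Function.Periodic.eq_zero_of_mul_deriv_eq {ξ f : ℝ → ℝ} {p c : ℝ}
    (hξ : Function.Periodic ξ p) (hp : p ≠ 0) (hf : ∀ x, 0 < f x)
    (hc : ∀ x, f x * deriv ξ x = c) : c = 0 := by
  have hderiv : ∀ x, deriv ξ x = c / f x := fun x => by
    rw [← hc x, mul_div_cancel_left₀ _ (hf x).ne']
  have hξp : ξ p = ξ 0 := by simpa using hξ 0
  by_contra hc0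
  refine hp ?_
  rcases Ne.lt_or_gt hc0 with hneg | hpos
  · exact (strictAnti_of_deriv_neg fun x => hderiv x ▸ div_neg_of_neg_of_pos hneg (hf x)).injective hξp
  · exact (strictMono_of_deriv_pos fun x => hderiv x ▸ div_pos hpos (hf x)).injective hξp

theorem hasCompactSupport_potV (R ℓ : ℝ) : HasCompactSupport (potV R ℓ) :=
  HasCompactSupport.intro (isCompact_closedBall 0 R) fun x hx => by
    rw [Metric.mem_closedBall, dist_zero_right, not_le, norm_eq_abs] at hx
    exact if_neg hx.le.not_gt

theorem Vconv_eq_integral_mul_sub (R ℓ : ℝ) (f : ℝ → ℝ) :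
    Vconv R ℓ f = fun x => ∫ t, potV R ℓ t * f (x - t) := funext fun x => by
  rw [Vconv, ← integral_sub_left_eq_self _ volume x]
  simp only [sub_sub_cancel]

theorem hasDerivAt_Vconv (R ℓ : ℝ) {f : ℝ → ℝ} (hf : ContDiff ℝ 1 f) (x : ℝ) :
    HasDerivAt (Vconv R ℓ f) (Vconv R ℓ (deriv f) x) x := by
  rw [Vconv_eq_integral_mul_sub, Vconv_eq_integral_mul_sub]
  exact hasDerivAt_integral_mul_sub (continuous_potV R ℓ) (hasCompactSupport_potV R ℓ) hf x

theorem stationary_state_xi_constant_general (L R ℓ D : ℝ) (hL : 0 < L) (f : ℝ → ℝ)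
    (hf : ContDiff ℝ 2 f)
    (hper : Function.Periodic f (2 * L))
    (hpos : ∀ x, 0 < f x)
    (hflux : ∀ x, deriv (fun x' => D * deriv f x' + f x' * deriv (Vconv R ℓ f) x') x = 0) :
    ∀ x y : ℝ,
      D * Real.log (f x) + Vconv R ℓ f x = D * Real.log (f y) + Vconv R ℓ f y := by
  have hf1 : ContDiff ℝ 1 (deriv f) := hf.deriv'
  have hdf : Differentiable ℝ f := hf.differentiable (by norm_num)
  set ξ := fun x => D * Real.log (f x) + Vconv R ℓ f x
  have hξ : ∀ x, HasDerivAt ξ (D * (deriv f x / f x) + Vconv R ℓ (deriv f) x) x := fun x =>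
    (((hdf x).hasDerivAt.log (hpos x).ne').const_mul D).add (hasDerivAt_Vconv R ℓ hf.of_succ x)
  have hVderiv : deriv (Vconv R ℓ f) = Vconv R ℓ (deriv f) :=
    funext fun x => (hasDerivAt_Vconv R ℓ hf.of_succ x).deriv
  set J := fun x => D * deriv f x + f x * Vconv R ℓ (deriv f) x
  have hJ : ∀ x, J x = J 0 := fun x =>
    is_const_of_deriv_eq_zero
      (((hf1.differentiable one_ne_zero).const_mul D).add
        (hdf.mul fun x => (hasDerivAt_Vconv R ℓ hf1 x).differentiableAt))
      (fun x => hVderiv ▸ hflux x) x 0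
  have hfξ : ∀ x, f x * deriv ξ x = J 0 := fun x => by
    rw [(hξ x).deriv, ← hJ x]
    simp only [J]
    field_simp [(hpos x).ne']
  have hξper : Function.Periodic ξ (2 * L) := fun x => by
    simp only [ξ, hper x, Vconv_eq_integral_mul_sub, hper.integral_mul_sub x]
  have hJ0 := hξper.eq_zero_of_mul_deriv_eq (by positivity) hpos hfξ
  refine is_const_of_deriv_eq_zero (fun x => (hξ x).differentiableAt) fun x => ?_
  simpa [hJ0, (hpos x).ne'] using hfξ x

theorem stationary_state_xi_constant (L R ℓ D : ℝ) (hL : 0 < L) (hR : 0 < R) (hRL : R ≤ L)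
    (hℓ : 0 ≤ ℓ) (hD : 0 < D) (f : ℝ → ℝ)
    (hf : ContDiff ℝ 2 f)
    (hper : Function.Periodic f (2 * L))
    (hpos : ∀ x, 0 < f x)
    (hflux : ∀ x, deriv (fun x' => D * deriv f x' + f x' * deriv (Vconv R ℓ f) x') x = 0) :
    ∀ x y : ℝ,
      D * Real.log (f x) + Vconv R ℓ f x = D * Real.log (f y) + Vconv R ℓ f y :=
  stationary_state_xi_constant_general L R ℓ D hL f hf hper hpos hflux
end
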